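/- Let G be a finite simple graph that is a triangle clique-sum of its induced subgraphs G₁ = G[V₁] and G₂ = G[V₂]. Then the number of connected components of the 4-coloring complex B(G) equals the product of the number of connected components of B(G₁) and the number of connected components of B(G₂). -/
import Mathlib


/-- A proper 4-coloring of a simple graph `G`. -/
def IsProperColoring {V : Type*} (G : SimpleGraph V) (f : V → Fin 4) : Prop :=
  ∀ ⦃u v : V⦄, G.Adj u v → f u ≠ f v

/-- `kempeCount G f a b` is the number of `ab`-Kempe chains of `f`, i.e. the number of
connected components of the subgraph of `G` induced on `f⁻¹({a, b})`. -/
noncomputable def kempeCount {V : Type*} (G : SimpleGraph V) (f : V → Fin 4)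
    (a b : Fin 4) : ℕ :=
  Nat.card ((G.induce {v | f v = a ∨ f v = b}).ConnectedComponent)

/-- Tutte's quantity `J_a(f) = p(a,b) + p(a,c) + p(a,d) - p(b,c) - p(b,d) - p(c,d)`,
where `{b, c, d} = Fin 4 \ {a}`. -/
noncomputable def Jcol {V : Type*} (G : SimpleGraph V) (f : V → Fin 4) (a : Fin 4) : ℤ :=
  (∑ x ∈ Finset.univ.erase a, (kempeCount G f a x : ℤ)) -
    ∑ x ∈ Finset.univ.erase a,
      ∑ y ∈ (Finset.univ.erase a).filter (fun y => x < y), (kempeCount G f x y : ℤ)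

/-- The coloring-partition of `f`: the set of its nonempty color classes. -/
def colPart {V : Type*} (f : V → Fin 4) : Set (Set V) :=
  {A | A.Nonempty ∧ ∃ c, A = f ⁻¹' {c}}

/-- `P` is a coloring-partition of `G` if it is the coloring-partition of some proper
4-coloring of `G`. -/
def IsColoringPartition {V : Type*} (G : SimpleGraph V) (P : Set (Set V)) : Prop :=
  ∃ f, IsProperColoring G f ∧ P = colPart f

/-- The set of all color classes of proper 4-colorings of `G`. -/
def colorClasses {V : Type*} (G : SimpleGraph V) : Set (Set V) :=
  {A | A.Nonempty ∧ ∃ f c, IsProperColoring G f ∧ A = f ⁻¹' {c}}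

/-- The 4-coloring complex `B(G)`: vertices are color classes of proper 4-colorings of `G`,
two distinct classes being adjacent iff they are color classes of a common proper
4-coloring. -/
def colorComplex {V : Type*} (G : SimpleGraph V) : SimpleGraph (colorClasses G) :=
  SimpleGraph.fromRel (fun A B => ∃ f, IsProperColoring G f ∧
    (∃ c, (A : Set V) = f ⁻¹' {c}) ∧ (∃ c, (B : Set V) = f ⁻¹' {c}))

/-- Two proper 4-colorings are adjacent if they have a common (nonempty) color class. -/
def ColAdj {V : Type*} (G : SimpleGraph V) (f g : V → Fin 4) : Prop :=
  IsProperColoring G f ∧ IsProperColoring G g ∧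
    ∃ c c', (f ⁻¹' {c}).Nonempty ∧ f ⁻¹' {c} = g ⁻¹' {c'}

namespace CSum
open Relation

lemma fin4_unique {a b c d e : Fin 4} (hab : a≠b) (hac: a≠c) (hbc: b≠c)
    (hda : d≠a) (hdb : d≠b) (hdc : d≠c) (hea : e≠a) (heb : e≠b) (hec : e≠c) : d = e := by
  revert hab hac hbc hda hdb hdc hea heb hec; revert a b c d e; decide

lemma fin4_cases (e : Fin 4) {a b c d : Fin 4} (hab : a≠b) (hac: a≠c) (had : a≠d)
    (hbc: b≠c) (hbd : b≠d) (hcd : c≠d) : e = a ∨ e = b ∨ e = c ∨ e = d := by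
  revert hab hac had hbc hbd hcd; revert e a b c d; decide

/-- the element of `Fin 4` different from `a`, `b`, `c` (when those are distinct). -/
def oth (a b c : Fin 4) : Fin 4 :=
  if 0 ≠ a ∧ 0 ≠ b ∧ 0 ≠ c then 0 else if 1 ≠ a ∧ 1 ≠ b ∧ 1 ≠ c then 1
  else if 2 ≠ a ∧ 2 ≠ b ∧ 2 ≠ c then 2 else 3

lemma oth_ne {a b c : Fin 4} (hab : a≠b) (hac : a≠c) (hbc : b≠c) :
    oth a b c ≠ a ∧ oth a b c ≠ b ∧ oth a b c ≠ c := by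
  revert hab hac hbc; revert a b c; decide

/-- the permutation of `Fin 4` sending `aᵢ ↦ bᵢ`. -/
def mkPerm (a₁ a₂ a₃ b₁ b₂ b₃ : Fin 4) : Fin 4 → Fin 4 := fun e =>
  if e = a₁ then b₁ else if e = a₂ then b₂ else if e = a₃ then b₃ else oth b₁ b₂ b₃

section mkPerm
variable {a₁ a₂ a₃ b₁ b₂ b₃ : Fin 4} (ha12 : a₁≠a₂) (ha13 : a₁≠a₃) (ha23 : a₂≠a₃)
  (hb12 : b₁≠b₂) (hb13 : b₁≠b₃) (hb23 : b₂≠b₃)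

lemma mkPerm_a1 : mkPerm a₁ a₂ a₃ b₁ b₂ b₃ a₁ = b₁ := by simp [mkPerm]

include ha12 in
lemma mkPerm_a2 : mkPerm a₁ a₂ a₃ b₁ b₂ b₃ a₂ = b₂ := by simp [mkPerm, ha12.symm]

include ha13 ha23 in
lemma mkPerm_a3 : mkPerm a₁ a₂ a₃ b₁ b₂ b₃ a₃ = b₃ := by simp [mkPerm, ha13.symm, ha23.symm]

include ha12 ha13 ha23 hb12 hb13 hb23 in
lemma mkPerm_inj : Function.Injective (mkPerm a₁ a₂ a₃ b₁ b₂ b₃) := by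
  have H : ∀ (c₁ c₂ c₃ d₁ d₂ d₃ : Fin 4), (c₁≠c₂ ∧ c₁≠c₃ ∧ c₂≠c₃ ∧ d₁≠d₂ ∧ d₁≠d₃ ∧ d₂≠d₃) →
      ∀ u v, mkPerm c₁ c₂ c₃ d₁ d₂ d₃ u = mkPerm c₁ c₂ c₃ d₁ d₂ d₃ v → u = v := by decide
  exact fun u v h => H a₁ a₂ a₃ b₁ b₂ b₃ ⟨ha12, ha13, ha23, hb12, hb13, hb23⟩ u v h

include ha12 ha13 ha23 hb12 hb13 hb23 in
/-- key lemma: if membership of `a` among the `aᵢ` matches membership of `b`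
among the `bᵢ` (pointwise), then `mkPerm` sends `a` to `b`. -/
lemma mkPerm_key {a b : Fin 4} (h1 : a₁ = a ↔ b₁ = b) (h2 : a₂ = a ↔ b₂ = b)
    (h3 : a₃ = a ↔ b₃ = b) : mkPerm a₁ a₂ a₃ b₁ b₂ b₃ a = b := by
  by_cases e1 : a = a₁
  · subst e1; rw [mkPerm_a1]; exact h1.mp rfl
  · by_cases e2 : a = a₂
    · subst e2; rw [mkPerm_a2 ha12]; exact h2.mp rfl
    · by_cases e3 : a = a₃
      · subst e3; rw [mkPerm_a3 ha13 ha23]; exact h3.mp rfl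
      · have : mkPerm a₁ a₂ a₃ b₁ b₂ b₃ a = oth b₁ b₂ b₃ := by
          simp [mkPerm, e1, e2, e3]
        rw [this]
        obtain ⟨h1', h2', h3'⟩ := oth_ne hb12 hb13 hb23
        exact fin4_unique hb12 hb13 hb23 h1' h2' h3'
          (fun h => e1 (h1.mpr h.symm).symm) (fun h => e2 (h2.mpr h.symm).symm)
          (fun h => e3 (h3.mpr h.symm).symm)

lemma fix3 {σ : Fin 4 → Fin 4} (hσ : Function.Injective σ) {a b c : Fin 4}
    (hab : a≠b) (hac : a≠c) (hbc : b≠c) (ha : σ a = a) (hb : σ b = b) (hc : σ c = c)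
    (e : Fin 4) : σ e = e := by
  by_cases e1 : e = a; · subst e1; exact ha
  by_cases e2 : e = b; · subst e2; exact hb
  by_cases e3 : e = c; · subst e3; exact hc
  refine fin4_unique hab hac hbc ?_ ?_ ?_ e1 e2 e3
  · exact fun h => e1 (hσ (h.trans ha.symm))
  · exact fun h => e2 (hσ (h.trans hb.symm))
  · exact fun h => e3 (hσ (h.trans hc.symm))

end mkPerm
end CSum
namespace CSum
open Relation

section ColAdjBasic
variable {W : Type*} {H : SimpleGraph W} {f g : W → Fin 4}

lemma colAdj_symm (hfg : ColAdj H f g) : ColAdj H g f := by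
  obtain ⟨hf, hg, c, c', hne, heq⟩ := hfg
  exact ⟨hg, hf, c', c, heq ▸ hne, heq.symm⟩

lemma colAdj_self (hf : IsProperColoring H f) (w : W) : ColAdj H f f :=
  ⟨hf, hf, f w, f w, ⟨w, rfl⟩, rfl⟩

lemma proper_comp {σ : Fin 4 → Fin 4} (hσ : Function.Injective σ)
    (hf : IsProperColoring H f) : IsProperColoring H (σ ∘ f) :=
  fun _ _ hadj he => hf hadj (hσ he)

lemma colAdj_comp {σ : Fin 4 → Fin 4} (hσ : Function.Injective σ)
    (hf : IsProperColoring H f) (w : W) : ColAdj H (σ ∘ f) f := by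
  refine ⟨proper_comp hσ hf, hf, σ (f w), f w, ⟨w, rfl⟩, ?_⟩
  ext v
  simp only [Set.mem_preimage, Set.mem_singleton_iff, Function.comp_apply]
  exact ⟨fun hh => hσ hh, fun hh => hh ▸ rfl⟩

end ColAdjBasic

section LemA
variable {W : Type*} {H : SimpleGraph W}

/-- intermediate colorings for the three-coloring connection -/
def q1 (h : W → Fin 4) (c₀ d : Fin 4) : W → Fin 4 := fun v =>
  if h v = c₀ then d else h v

def q2 (h h' : W → Fin 4) (c₀ c₁ d : Fin 4) : W → Fin 4 := fun v =>
  if h' v = c₀ then (if h v = c₁ then c₀ else if h v = c₀ then d else h v)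
  else (if h v = c₀ then d else h v)

def q3 (h h' : W → Fin 4) (c₀ d : Fin 4) : W → Fin 4 := fun v =>
  if h' v = c₀ then (if h v = c₀ then d else c₀)
  else (if h v = c₀ then d else h v)

def q4 (h h' : W → Fin 4) (c₀ d : Fin 4) : W → Fin 4 := fun v =>
  if h' v = c₀ then c₀ else (if h v = c₀ then d else h v)

def q5 (h h' : W → Fin 4) (c₀ c₁ c₂ d : Fin 4) : W → Fin 4 := fun v =>
  if h' v = c₀ then c₀ else if h v = c₂ then c₂ else if h' v = c₁ then c₁ else d

def q6 (h h' : W → Fin 4) (c₀ c₁ c₂ d : Fin 4) : W → Fin 4 := fun v =>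
  if h' v = c₀ then c₀ else if h' v = c₁ then c₁ else if h v = c₂ then c₂ else d

set_option maxHeartbeats 4000000 in
/-- Two proper colorings of a graph with a triangle `a b c`, agreeing on the triangle
and both missing the color `d`, are `ColAdj`-equivalent. -/
lemma threeColor_agree {a b c : W} (hH1 : H.Adj a b) (hH2 : H.Adj a c) (hH3 : H.Adj b c)
    {h h' : W → Fin 4}
    (hp : IsProperColoring H h) (hp' : IsProperColoring H h')
    (ha' : h' a = h a) (hb' : h' b = h b) (hc' : h' c = h c)
    {d : Fin 4} (hd : ∀ v, h v ≠ d) (hd' : ∀ v, h' v ≠ d) :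
    Relation.EqvGen (ColAdj H) h h' := by
  obtain ⟨c₀, hc₀⟩ : ∃ e, h a = e := ⟨_, rfl⟩
  obtain ⟨c₁, hc₁⟩ : ∃ e, h b = e := ⟨_, rfl⟩
  obtain ⟨c₂, hc₂⟩ : ∃ e, h c = e := ⟨_, rfl⟩
  rw [hc₀] at ha'; rw [hc₁] at hb'; rw [hc₂] at hc'
  have hc01 : c₀ ≠ c₁ := hc₀ ▸ hc₁ ▸ hp hH1
  have hc02 : c₀ ≠ c₂ := hc₀ ▸ hc₂ ▸ hp hH2
  have hc12 : c₁ ≠ c₂ := hc₁ ▸ hc₂ ▸ hp hH3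
  have hc10 : c₁ ≠ c₀ := hc01.symm
  have hc20 : c₂ ≠ c₀ := hc02.symm
  have hc21 : c₂ ≠ c₁ := hc12.symm
  have h0d : c₀ ≠ d := hc₀ ▸ hd a
  have h1d : c₁ ≠ d := hc₁ ▸ hd b
  have h2d : c₂ ≠ d := hc₂ ▸ hd c
  have hd0 : d ≠ c₀ := h0d.symm
  have hd1 : d ≠ c₁ := h1d.symm
  have hd2 : d ≠ c₂ := h2d.symm
  have hv : ∀ v, h v = c₀ ∨ h v = c₁ ∨ h v = c₂ := by
    intro v
    rcases fin4_cases (h v) hc01 hc02 h0d hc12 h1d h2d with e|e|e|e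
    · exact Or.inl e
    · exact Or.inr (Or.inl e)
    · exact Or.inr (Or.inr e)
    · exact absurd e (hd v)
  have hv' : ∀ v, h' v = c₀ ∨ h' v = c₁ ∨ h' v = c₂ := by
    intro v
    rcases fin4_cases (h' v) hc01 hc02 h0d hc12 h1d h2d with e|e|e|e
    · exact Or.inl e
    · exact Or.inr (Or.inl e)
    · exact Or.inr (Or.inr e)
    · exact absurd e (hd' v)
  -- properness of the intermediate colorings
  have hq1 : IsProperColoring H (q1 h c₀ d) := by
    intro u v hadj heq
    have hne := hp hadj
    have h1 := hv u; have h2 := hv v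
    clear hp hp' hv hv' hd hd' hadj hH1 hH2 hH3
    rcases h1 with e1|e1|e1 <;> rcases h2 with e2|e2|e2 <;> simp_all [q1]
  have hq2 : IsProperColoring H (q2 h h' c₀ c₁ d) := by
    intro u v hadj heq
    have hne := hp hadj; have hne' := hp' hadj
    have h1 := hv u; have h2 := hv v; have h3 := hv' u; have h4 := hv' v
    clear hp hp' hv hv' hd hd' hadj hH1 hH2 hH3
    rcases h1 with e1|e1|e1 <;> rcases h2 with e2|e2|e2 <;>
      rcases h3 with e3|e3|e3 <;> rcases h4 with e4|e4|e4 <;> simp_all [q2]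
  have hq3 : IsProperColoring H (q3 h h' c₀ d) := by
    intro u v hadj heq
    have hne := hp hadj; have hne' := hp' hadj
    have h1 := hv u; have h2 := hv v; have h3 := hv' u; have h4 := hv' v
    clear hp hp' hv hv' hd hd' hadj hH1 hH2 hH3
    rcases h1 with e1|e1|e1 <;> rcases h2 with e2|e2|e2 <;>
      rcases h3 with e3|e3|e3 <;> rcases h4 with e4|e4|e4 <;> simp_all [q3]
  have hq4 : IsProperColoring H (q4 h h' c₀ d) := by
    intro u v hadj heq
    have hne := hp hadj; have hne' := hp' hadj
    have h1 := hv u; have h2 := hv v; have h3 := hv' u; have h4 := hv' v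
    clear hp hp' hv hv' hd hd' hadj hH1 hH2 hH3
    rcases h1 with e1|e1|e1 <;> rcases h2 with e2|e2|e2 <;>
      rcases h3 with e3|e3|e3 <;> rcases h4 with e4|e4|e4 <;> simp_all [q4]
  have hq5 : IsProperColoring H (q5 h h' c₀ c₁ c₂ d) := by
    intro u v hadj heq
    have hne := hp hadj; have hne' := hp' hadj
    have h1 := hv u; have h2 := hv v; have h3 := hv' u; have h4 := hv' v
    clear hp hp' hv hv' hd hd' hadj hH1 hH2 hH3
    rcases h1 with e1|e1|e1 <;> rcases h2 with e2|e2|e2 <;>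
      rcases h3 with e3|e3|e3 <;> rcases h4 with e4|e4|e4 <;> simp_all [q5]
  have hq6 : IsProperColoring H (q6 h h' c₀ c₁ c₂ d) := by
    intro u v hadj heq
    have hne := hp hadj; have hne' := hp' hadj
    have h1 := hv u; have h2 := hv v; have h3 := hv' u; have h4 := hv' v
    clear hp hp' hv hv' hd hd' hadj hH1 hH2 hH3
    rcases h1 with e1|e1|e1 <;> rcases h2 with e2|e2|e2 <;>
      rcases h3 with e3|e3|e3 <;> rcases h4 with e4|e4|e4 <;> simp_all [q6]
  -- the chain
  have s1 : ColAdj H h (q1 h c₀ d) := by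
    refine ⟨hp, hq1, c₁, c₁, ⟨b, hc₁⟩, ?_⟩
    ext v
    simp only [Set.mem_preimage, Set.mem_singleton_iff, q1]
    have h1 := hv v
    clear hp hp' hv hv' hd hd' hq1 hq2 hq3 hq4 hq5 hq6 hH1 hH2 hH3
    rcases h1 with e|e|e <;> simp_all
  have s2 : ColAdj H (q1 h c₀ d) (q2 h h' c₀ c₁ d) := by
    refine ⟨hq1, hq2, c₂, c₂, ⟨c, ?_⟩, ?_⟩
    · simp [q1, hc₂, hc20]
    ext v
    simp only [Set.mem_preimage, Set.mem_singleton_iff, q1, q2]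
    have h1 := hv v; have h2 := hv' v
    clear hp hp' hv hv' hd hd' hq1 hq2 hq3 hq4 hq5 hq6 hH1 hH2 hH3
    rcases h1 with e|e|e <;> rcases h2 with e'|e'|e' <;> simp_all
  have s3 : ColAdj H (q2 h h' c₀ c₁ d) (q3 h h' c₀ d) := by
    refine ⟨hq2, hq3, d, d, ⟨a, ?_⟩, ?_⟩
    · simp [q2, hc₀, ha', hc10, hc01]
    ext v
    simp only [Set.mem_preimage, Set.mem_singleton_iff, q2, q3]
    have h1 := hv v; have h2 := hv' v
    clear hp hp' hv hv' hd hd' hq1 hq2 hq3 hq4 hq5 hq6 hH1 hH2 hH3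
    rcases h1 with e|e|e <;> rcases h2 with e'|e'|e' <;> simp_all
  have s4 : ColAdj H (q3 h h' c₀ d) (q4 h h' c₀ d) := by
    refine ⟨hq3, hq4, c₁, c₁, ⟨b, ?_⟩, ?_⟩
    · simp [q3, hc₁, hb', hc10, hc01]
    ext v
    simp only [Set.mem_preimage, Set.mem_singleton_iff, q3, q4]
    have h1 := hv v; have h2 := hv' v
    clear hp hp' hv hv' hd hd' hq1 hq2 hq3 hq4 hq5 hq6 hH1 hH2 hH3
    rcases h1 with e|e|e <;> rcases h2 with e'|e'|e' <;> simp_all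
  have s5 : ColAdj H (q4 h h' c₀ d) (q5 h h' c₀ c₁ c₂ d) := by
    refine ⟨hq4, hq5, c₂, c₂, ⟨c, ?_⟩, ?_⟩
    · simp [q4, hc₂, hc', hc20, hc02]
    ext v
    simp only [Set.mem_preimage, Set.mem_singleton_iff, q4, q5]
    have h1 := hv v; have h2 := hv' v
    clear hp hp' hv hv' hd hd' hq1 hq2 hq3 hq4 hq5 hq6 hH1 hH2 hH3
    rcases h1 with e|e|e <;> rcases h2 with e'|e'|e' <;> simp_all
  have s6 : ColAdj H (q5 h h' c₀ c₁ c₂ d) (q6 h h' c₀ c₁ c₂ d) := by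
    refine ⟨hq5, hq6, c₀, c₀, ⟨a, ?_⟩, ?_⟩
    · simp [q5, ha']
    ext v
    simp only [Set.mem_preimage, Set.mem_singleton_iff, q5, q6]
    have h1 := hv v; have h2 := hv' v
    clear hp hp' hv hv' hd hd' hq1 hq2 hq3 hq4 hq5 hq6 hH1 hH2 hH3
    rcases h1 with e|e|e <;> rcases h2 with e'|e'|e' <;> simp_all
  have s7 : ColAdj H (q6 h h' c₀ c₁ c₂ d) h' := by
    refine ⟨hq6, hp', c₀, c₀, ⟨a, ?_⟩, ?_⟩
    · simp [q6, ha']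
    ext v
    simp only [Set.mem_preimage, Set.mem_singleton_iff, q6]
    have h1 := hv v; have h2 := hv' v
    clear hp hp' hv hv' hd hd' hq1 hq2 hq3 hq4 hq5 hq6 hH1 hH2 hH3
    rcases h1 with e|e|e <;> rcases h2 with e'|e'|e' <;> simp_all
  exact (EqvGen.rel _ _ s1).trans _ _ _ ((EqvGen.rel _ _ s2).trans _ _ _
    ((EqvGen.rel _ _ s3).trans _ _ _ ((EqvGen.rel _ _ s4).trans _ _ _
    ((EqvGen.rel _ _ s5).trans _ _ _ ((EqvGen.rel _ _ s6).trans _ _ _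
    (EqvGen.rel _ _ s7))))))

/-- Two proper colorings of a graph with a triangle, each missing some color,
are `ColAdj`-equivalent. -/
lemma threeColor_equiv {a b c : W} (hH1 : H.Adj a b) (hH2 : H.Adj a c) (hH3 : H.Adj b c)
    {h h' : W → Fin 4}
    (hp : IsProperColoring H h) (hp' : IsProperColoring H h')
    {d d' : Fin 4} (hd : ∀ v, h v ≠ d) (hd' : ∀ v, h' v ≠ d') :
    Relation.EqvGen (ColAdj H) h h' := by
  have hab' : h' a ≠ h' b := hp' hH1
  have hac' : h' a ≠ h' c := hp' hH2
  have hbc' : h' b ≠ h' c := hp' hH3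
  have hab : h a ≠ h b := hp hH1
  have hac : h a ≠ h c := hp hH2
  have hbc : h b ≠ h c := hp hH3
  have hσ : Function.Injective (mkPerm (h' a) (h' b) (h' c) (h a) (h b) (h c)) :=
    mkPerm_inj hab' hac' hbc' hab hac hbc
  have key : Relation.EqvGen (ColAdj H) h
      ((mkPerm (h' a) (h' b) (h' c) (h a) (h b) (h c)) ∘ h') := by
    refine threeColor_agree hH1 hH2 hH3 hp (proper_comp hσ hp') ?_ ?_ ?_ hd ?_
    · show mkPerm _ _ _ _ _ _ (h' a) = h a; exact mkPerm_a1
    · show mkPerm _ _ _ _ _ _ (h' b) = h b; exact mkPerm_a2 hab'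
    · show mkPerm _ _ _ _ _ _ (h' c) = h c; exact mkPerm_a3 hac' hbc'
    · intro v hvd
      rcases fin4_cases (h' v) hab' hac' (hd' a) hbc' (hd' b) (hd' c) with e|e|e|e
      · rw [Function.comp_apply, e, mkPerm_a1] at hvd; exact hd a hvd
      · rw [Function.comp_apply, e, mkPerm_a2 hab'] at hvd; exact hd b hvd
      · rw [Function.comp_apply, e, mkPerm_a3 hac' hbc'] at hvd; exact hd c hvd
      · exact hd' v e
  exact key.trans _ _ _ (EqvGen.rel _ _ (colAdj_comp hσ hp' a))

end LemA
end CSum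
namespace CSum
open Relation SimpleGraph

section CompQuot
variable {W : Type*} {H : SimpleGraph W}

/-- the type of proper colorings -/
def PC (H : SimpleGraph W) : Type _ := {f : W → Fin 4 // IsProperColoring H f}

def colSetoid (H : SimpleGraph W) : Setoid (PC H) :=
  Setoid.comap Subtype.val (Relation.EqvGen.setoid (ColAdj H))

abbrev QPC (H : SimpleGraph W) := Quotient (colSetoid H)

lemma qpc_rel {f g : PC H} (h : Relation.EqvGen (ColAdj H) f.1 g.1) :
    (⟦f⟧ : QPC H) = ⟦g⟧ := Quotient.sound h

lemma qpc_exact {f g : PC H} (h : (⟦f⟧ : QPC H) = ⟦g⟧) :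
    Relation.EqvGen (ColAdj H) f.1 g.1 := Quotient.exact h

lemma eqvGen_proper_or_eq {f g : W → Fin 4} (h : Relation.EqvGen (ColAdj H) f g) :
    f = g ∨ (IsProperColoring H f ∧ IsProperColoring H g) := by
  induction h with
  | rel a b hab => exact Or.inr ⟨hab.1, hab.2.1⟩
  | refl a => exact Or.inl rfl
  | symm a b _ ih => rcases ih with rfl|⟨h1,h2⟩; exacts [Or.inl rfl, Or.inr ⟨h2,h1⟩]
  | trans a b c _ _ ih1 ih2 =>
      rcases ih1 with rfl|⟨h1,h2⟩
      · exact ih2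
      · rcases ih2 with rfl|⟨h3,h4⟩
        · exact Or.inr ⟨h1, h2⟩
        · exact Or.inr ⟨h1, h4⟩

/-- a color class of a proper coloring, as a vertex of the coloring complex -/
def classVert (f : PC H) (e : Fin 4) (hne : (f.1 ⁻¹' {e}).Nonempty) : colorClasses H :=
  ⟨f.1 ⁻¹' {e}, hne, f.1, e, f.2, rfl⟩

lemma reach_same (f : PC H) (A B : colorClasses H)
    (hA : ∃ e, (A : Set W) = f.1 ⁻¹' {e}) (hB : ∃ e, (B : Set W) = f.1 ⁻¹' {e}) :
    (colorComplex H).Reachable A B := by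
  by_cases hab : A = B
  · exact hab ▸ Reachable.refl A
  · refine SimpleGraph.Adj.reachable ?_
    show (SimpleGraph.fromRel _).Adj A B
    rw [SimpleGraph.fromRel_adj]
    exact ⟨hab, Or.inl ⟨f.1, f.2, hA, hB⟩⟩

variable (w : W)

lemma toComp_step {f g : W → Fin 4} (h : ColAdj H f g) (hf : IsProperColoring H f)
    (hg : IsProperColoring H g) :
    (colorComplex H).connectedComponentMk (classVert ⟨f, hf⟩ (f w) ⟨w, rfl⟩) =
      (colorComplex H).connectedComponentMk (classVert ⟨g, hg⟩ (g w) ⟨w, rfl⟩) := by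
  obtain ⟨_, _, c, c', hne, heq⟩ := h
  have h1 : (colorComplex H).Reachable (classVert ⟨f, hf⟩ (f w) ⟨w, rfl⟩)
      (classVert ⟨f, hf⟩ c hne) := reach_same ⟨f, hf⟩ _ _ ⟨f w, rfl⟩ ⟨c, rfl⟩
  have hsub : classVert ⟨f, hf⟩ c hne = classVert ⟨g, hg⟩ c' (heq ▸ hne) :=
    Subtype.ext heq
  have h2 : (colorComplex H).Reachable (classVert ⟨g, hg⟩ c' (heq ▸ hne))
      (classVert ⟨g, hg⟩ (g w) ⟨w, rfl⟩) := reach_same ⟨g, hg⟩ _ _ ⟨c', rfl⟩ ⟨g w, rfl⟩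
  rw [hsub] at h1
  exact SimpleGraph.ConnectedComponent.sound (h1.trans h2)

lemma toComp_eqv {f g : W → Fin 4} (h : Relation.EqvGen (ColAdj H) f g) :
    ∀ (hf : IsProperColoring H f) (hg : IsProperColoring H g),
    (colorComplex H).connectedComponentMk (classVert ⟨f, hf⟩ (f w) ⟨w, rfl⟩) =
      (colorComplex H).connectedComponentMk (classVert ⟨g, hg⟩ (g w) ⟨w, rfl⟩) := by
  induction h with
  | rel a b hab => exact fun hf hg => toComp_step w hab hf hg
  | refl a => exact fun hf hg => rfl
  | symm a b hab ih => exact fun hf hg => (ih hg hf).symm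
  | trans a b c hab hbc ih1 ih2 =>
      intro hf hg
      rcases eqvGen_proper_or_eq hab with rfl|⟨_, hb⟩
      · exact ih2 hf hg
      · exact (ih1 hf hb).trans (ih2 hb hg)

/-- from the quotient of colorings to connected components -/
def toComp : QPC H → (colorComplex H).ConnectedComponent :=
  Quotient.lift
    (fun f : PC H => (colorComplex H).connectedComponentMk (classVert f (f.1 w) ⟨w, rfl⟩))
    (fun f g hfg => toComp_eqv w hfg f.2 g.2)

/-- a coloring witnessing a color class -/
noncomputable def vCol (A : colorClasses H) : PC H :=
  ⟨A.2.2.choose, A.2.2.choose_spec.choose_spec.1⟩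

lemma vCol_spec (A : colorClasses H) :
    (A : Set W) = (vCol A).1 ⁻¹' {A.2.2.choose_spec.choose} :=
  A.2.2.choose_spec.choose_spec.2

lemma vToQ_adj {A B : colorClasses H} (h : (colorComplex H).Adj A B) :
    (⟦vCol A⟧ : QPC H) = ⟦vCol B⟧ := by
  rw [colorComplex, SimpleGraph.fromRel_adj] at h
  obtain ⟨hne, hrel⟩ := h
  have key : ∀ (P Q : colorClasses H), (∃ f, IsProperColoring H f ∧
      (∃ c, (P : Set W) = f ⁻¹' {c}) ∧ (∃ c, (Q : Set W) = f ⁻¹' {c})) →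
      (⟦vCol P⟧ : QPC H) = ⟦vCol Q⟧ := by
    intro P Q ⟨f, hf, ⟨c, hc⟩, ⟨c', hc'⟩⟩
    refine qpc_rel (Relation.EqvGen.trans _ f _ (Relation.EqvGen.rel _ _ ?_)
      (Relation.EqvGen.rel _ _ ?_))
    · exact ⟨(vCol P).2, hf, P.2.2.choose_spec.choose, c,
        by rw [← vCol_spec P]; exact P.2.1, by rw [← vCol_spec P]; exact hc⟩
    · exact ⟨hf, (vCol Q).2, c', Q.2.2.choose_spec.choose,
        by rw [← hc']; exact Q.2.1, hc'.symm.trans (vCol_spec Q)⟩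
  rcases hrel with h|h
  · exact key A B h
  · exact (key B A h).symm

lemma vToQ_walk {A B : colorClasses H} (p : (colorComplex H).Walk A B) :
    (⟦vCol A⟧ : QPC H) = ⟦vCol B⟧ := by
  induction p with
  | nil => rfl
  | cons hadj _ ih => exact (vToQ_adj hadj).trans ih

/-- from connected components to the quotient of colorings -/
noncomputable def fromComp : (colorComplex H).ConnectedComponent → QPC H :=
  Quot.lift (fun A : colorClasses H => (⟦vCol A⟧ : QPC H))
    (fun A B hR => hR.elim fun p => vToQ_walk p)

/-- the connected components of the coloring complex are in bijection with the
quotient of the proper colorings by the equivalence generated by `ColAdj`. -/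
noncomputable def compEquiv (w : W) : (colorComplex H).ConnectedComponent ≃ QPC H where
  toFun := fromComp
  invFun := toComp w
  left_inv := by
    refine Quot.ind fun A => ?_
    show toComp w (⟦vCol A⟧ : QPC H) = _
    refine SimpleGraph.ConnectedComponent.sound ?_
    refine reach_same (vCol A) _ A ⟨(vCol A).1 w, rfl⟩ ?_
    exact ⟨A.2.2.choose_spec.choose, vCol_spec A⟩
  right_inv := by
    refine Quotient.ind fun f => ?_
    show fromComp ((colorComplex H).connectedComponentMk _) = _
    refine qpc_rel (Relation.EqvGen.rel _ _ ?_)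
    set A := classVert f (f.1 w) ⟨w, rfl⟩ with hA
    refine ⟨(vCol A).2, f.2, A.2.2.choose_spec.choose, f.1 w, ?_, ?_⟩
    · exact (vCol_spec A) ▸ A.2.1
    · exact (vCol_spec A) ▸ rfl

end CompQuot
end CSum
namespace CSum
open Relation SimpleGraph

section Main
variable {V : Type*} {G : SimpleGraph V} {V₁ V₂ : Set V}

/-- agreement of two partial colorings on the overlap -/
def Agrees (V₁ V₂ : Set V) (f₁ : V₁ → Fin 4) (f₂ : V₂ → Fin 4) : Prop :=
  ∀ (v : V) (h1 : v ∈ V₁) (h2 : v ∈ V₂), f₁ ⟨v, h1⟩ = f₂ ⟨v, h2⟩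

/-- gluing two partial colorings -/
noncomputable def glue (hC : ∀ v : V, v ∉ V₁ → v ∈ V₂) (f₁ : V₁ → Fin 4)
    (f₂ : V₂ → Fin 4) : V → Fin 4 :=
  fun v => @dite _ (v ∈ V₁) (Classical.dec _) (fun h => f₁ ⟨v, h⟩) (fun h => f₂ ⟨v, hC v h⟩)

/-- restriction of a coloring -/
def restr (S : Set V) (f : V → Fin 4) : S → Fin 4 := fun u => f u

lemma restr_proper {S : Set V} {f : V → Fin 4} (hf : IsProperColoring G f) :
    IsProperColoring (G.induce S) (restr S f) := fun _ _ hadj => hf hadj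

variable {hC : ∀ v : V, v ∉ V₁ → v ∈ V₂} {f₁ g₁ : V₁ → Fin 4} {f₂ g₂ : V₂ → Fin 4}

lemma glue_mem1 {v : V} (h : v ∈ V₁) : glue hC f₁ f₂ v = f₁ ⟨v, h⟩ := by
  unfold glue; exact dif_pos h

lemma glue_mem2 (hag : Agrees V₁ V₂ f₁ f₂) {v : V} (h : v ∈ V₂) :
    glue hC f₁ f₂ v = f₂ ⟨v, h⟩ := by
  by_cases h1 : v ∈ V₁
  · rw [glue_mem1 h1]; exact hag v h1 h
  · unfold glue; exact dif_neg h1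

lemma glue_proper (hedges : ∀ u v, G.Adj u v → (u ∈ V₁ ∧ v ∈ V₁) ∨ (u ∈ V₂ ∧ v ∈ V₂))
    (hp₁ : IsProperColoring (G.induce V₁) f₁) (hp₂ : IsProperColoring (G.induce V₂) f₂)
    (hag : Agrees V₁ V₂ f₁ f₂) : IsProperColoring G (glue hC f₁ f₂) := by
  intro u v hadj heq
  rcases hedges u v hadj with ⟨hu, hv⟩ | ⟨hu, hv⟩
  · rw [glue_mem1 hu, glue_mem1 hv] at heq
    exact hp₁ (show (G.induce V₁).Adj ⟨u, hu⟩ ⟨v, hv⟩ from hadj) heq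
  · rw [glue_mem2 hag hu, glue_mem2 hag hv] at heq
    exact hp₂ (show (G.induce V₂).Adj ⟨u, hu⟩ ⟨v, hv⟩ from hadj) heq

lemma restr_glue1 : restr V₁ (glue hC f₁ f₂) = f₁ := by
  funext u
  show glue hC f₁ f₂ u.1 = f₁ u
  rw [glue_mem1 u.2]

lemma restr_glue2 (hag : Agrees V₁ V₂ f₁ f₂) : restr V₂ (glue hC f₁ f₂) = f₂ := by
  funext u
  show glue hC f₁ f₂ u.1 = f₂ u
  rw [glue_mem2 hag u.2]

lemma glue_restr {f : V → Fin 4} : glue hC (restr V₁ f) (restr V₂ f) = f := by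
  funext v
  by_cases h : v ∈ V₁
  · exact glue_mem1 h
  · unfold glue restr; exact dif_neg h

lemma restr_agrees {f : V → Fin 4} : Agrees V₁ V₂ (restr V₁ f) (restr V₂ f) :=
  fun _ _ _ => rfl

section Steps
variable {x y z : V}
  (hxy : G.Adj x y) (hxz : G.Adj x z) (hyz : G.Adj y z)
  (hinter : V₁ ∩ V₂ = {x, y, z})
  (hx1 : x ∈ V₁) (hy1 : y ∈ V₁) (hz1 : z ∈ V₁)
  (hx2 : x ∈ V₂) (hy2 : y ∈ V₂) (hz2 : z ∈ V₂)
  (hedges : ∀ u v, G.Adj u v → (u ∈ V₁ ∧ v ∈ V₁) ∨ (u ∈ V₂ ∧ v ∈ V₂))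

include hinter in
lemma overlap_cases {v : V} (h1 : v ∈ V₁) (h2 : v ∈ V₂) : v = x ∨ v = y ∨ v = z := by
  have : v ∈ V₁ ∩ V₂ := ⟨h1, h2⟩
  rw [hinter] at this
  simpa using this

include hxy hxz hyz hinter hx1 hy1 hz1 hx2 hy2 hz2 hedges in
/-- step in the first coordinate -/
lemma step1 (hstep : ColAdj (G.induce V₁) f₁ g₁)
    (hp₂ : IsProperColoring (G.induce V₂) f₂) (hag : Agrees V₁ V₂ f₁ f₂) :
    ∃ τ : Fin 4 → Fin 4, Function.Injective τ ∧
      IsProperColoring (G.induce V₂) (τ ∘ f₂) ∧ Agrees V₁ V₂ g₁ (τ ∘ f₂) ∧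
      ColAdj G (glue hC f₁ f₂) (glue hC g₁ (τ ∘ f₂)) := by
  obtain ⟨hp₁, hq₁, c, c', hne, heq⟩ := hstep
  have hiff : ∀ u : V₁, (f₁ u = c ↔ g₁ u = c') := by
    intro u
    have := Set.ext_iff.mp heq u
    simpa using this
  have adj2xy : (G.induce V₂).Adj ⟨x, hx2⟩ ⟨y, hy2⟩ := hxy
  have adj2xz : (G.induce V₂).Adj ⟨x, hx2⟩ ⟨z, hz2⟩ := hxz
  have adj2yz : (G.induce V₂).Adj ⟨y, hy2⟩ ⟨z, hz2⟩ := hyz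
  have adj1xy : (G.induce V₁).Adj ⟨x, hx1⟩ ⟨y, hy1⟩ := hxy
  have adj1xz : (G.induce V₁).Adj ⟨x, hx1⟩ ⟨z, hz1⟩ := hxz
  have adj1yz : (G.induce V₁).Adj ⟨y, hy1⟩ ⟨z, hz1⟩ := hyz
  have ha2 : f₂ ⟨x, hx2⟩ ≠ f₂ ⟨y, hy2⟩ := hp₂ adj2xy
  have hb2 : f₂ ⟨x, hx2⟩ ≠ f₂ ⟨z, hz2⟩ := hp₂ adj2xz
  have hc2 : f₂ ⟨y, hy2⟩ ≠ f₂ ⟨z, hz2⟩ := hp₂ adj2yz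
  have ha1 : g₁ ⟨x, hx1⟩ ≠ g₁ ⟨y, hy1⟩ := hq₁ adj1xy
  have hb1 : g₁ ⟨x, hx1⟩ ≠ g₁ ⟨z, hz1⟩ := hq₁ adj1xz
  have hc1 : g₁ ⟨y, hy1⟩ ≠ g₁ ⟨z, hz1⟩ := hq₁ adj1yz
  set τ : Fin 4 → Fin 4 := mkPerm (f₂ ⟨x, hx2⟩) (f₂ ⟨y, hy2⟩) (f₂ ⟨z, hz2⟩)
    (g₁ ⟨x, hx1⟩) (g₁ ⟨y, hy1⟩) (g₁ ⟨z, hz1⟩) with hτ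
  have hτinj : Function.Injective τ := mkPerm_inj ha2 hb2 hc2 ha1 hb1 hc1
  have hτx : τ (f₂ ⟨x, hx2⟩) = g₁ ⟨x, hx1⟩ := mkPerm_a1
  have hτy : τ (f₂ ⟨y, hy2⟩) = g₁ ⟨y, hy1⟩ := mkPerm_a2 ha2
  have hτz : τ (f₂ ⟨z, hz2⟩) = g₁ ⟨z, hz1⟩ := mkPerm_a3 hb2 hc2
  have hagr : Agrees V₁ V₂ g₁ (τ ∘ f₂) := by
    intro v h1 h2
    rcases overlap_cases hinter h1 h2 with rfl | rfl | rfl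
    · exact hτx.symm
    · exact hτy.symm
    · exact hτz.symm
  have hτc : τ c = c' := by
    refine mkPerm_key ha2 hb2 hc2 ha1 hb1 hc1 ?_ ?_ ?_
    · rw [← hag x hx1 hx2]; exact hiff _
    · rw [← hag y hy1 hy2]; exact hiff _
    · rw [← hag z hz1 hz2]; exact hiff _
  refine ⟨τ, hτinj, proper_comp hτinj hp₂, hagr, ?_⟩
  refine ⟨glue_proper hedges hp₁ hp₂ hag, glue_proper hedges hq₁ (proper_comp hτinj hp₂) hagr,
    c, c', ?_, ?_⟩
  · obtain ⟨u, hu⟩ := hne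
    refine ⟨u.1, ?_⟩
    show glue hC f₁ f₂ u.1 = c
    rw [glue_mem1 u.2]
    exact hu
  · ext v
    simp only [Set.mem_preimage, Set.mem_singleton_iff]
    by_cases h1 : v ∈ V₁
    · rw [glue_mem1 h1, glue_mem1 h1]
      exact hiff ⟨v, h1⟩
    · rw [show glue hC f₁ f₂ v = f₂ ⟨v, hC v h1⟩ from by unfold glue; exact dif_neg h1,
        show glue hC g₁ (τ ∘ f₂) v = (τ ∘ f₂) ⟨v, hC v h1⟩ from by unfold glue; exact dif_neg h1]
      show f₂ _ = c ↔ τ (f₂ _) = c'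
      constructor
      · intro h; rw [h, hτc]
      · intro h; rw [← hτc] at h; exact hτinj h

include hxy hxz hyz hinter hx1 hy1 hz1 hx2 hy2 hz2 hedges in
/-- step in the second coordinate -/
lemma step2 (hstep : ColAdj (G.induce V₂) f₂ g₂)
    (hp₁ : IsProperColoring (G.induce V₁) f₁) (hag : Agrees V₁ V₂ f₁ f₂) :
    ∃ σ : Fin 4 → Fin 4, Function.Injective σ ∧
      IsProperColoring (G.induce V₂) (σ ∘ g₂) ∧ Agrees V₁ V₂ f₁ (σ ∘ g₂) ∧
      ColAdj G (glue hC f₁ f₂) (glue hC f₁ (σ ∘ g₂)) := by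
  obtain ⟨hp₂, hq₂, c, c', hne, heq⟩ := hstep
  have hiff : ∀ u : V₂, (f₂ u = c ↔ g₂ u = c') := by
    intro u
    have := Set.ext_iff.mp heq u
    simpa using this
  have adj2xy : (G.induce V₂).Adj ⟨x, hx2⟩ ⟨y, hy2⟩ := hxy
  have adj2xz : (G.induce V₂).Adj ⟨x, hx2⟩ ⟨z, hz2⟩ := hxz
  have adj2yz : (G.induce V₂).Adj ⟨y, hy2⟩ ⟨z, hz2⟩ := hyz
  have adj1xy : (G.induce V₁).Adj ⟨x, hx1⟩ ⟨y, hy1⟩ := hxy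
  have adj1xz : (G.induce V₁).Adj ⟨x, hx1⟩ ⟨z, hz1⟩ := hxz
  have adj1yz : (G.induce V₁).Adj ⟨y, hy1⟩ ⟨z, hz1⟩ := hyz
  have ha2 : g₂ ⟨x, hx2⟩ ≠ g₂ ⟨y, hy2⟩ := hq₂ adj2xy
  have hb2 : g₂ ⟨x, hx2⟩ ≠ g₂ ⟨z, hz2⟩ := hq₂ adj2xz
  have hc2 : g₂ ⟨y, hy2⟩ ≠ g₂ ⟨z, hz2⟩ := hq₂ adj2yz
  have ha1 : f₁ ⟨x, hx1⟩ ≠ f₁ ⟨y, hy1⟩ := hp₁ adj1xy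
  have hb1 : f₁ ⟨x, hx1⟩ ≠ f₁ ⟨z, hz1⟩ := hp₁ adj1xz
  have hc1 : f₁ ⟨y, hy1⟩ ≠ f₁ ⟨z, hz1⟩ := hp₁ adj1yz
  set σ : Fin 4 → Fin 4 := mkPerm (g₂ ⟨x, hx2⟩) (g₂ ⟨y, hy2⟩) (g₂ ⟨z, hz2⟩)
    (f₁ ⟨x, hx1⟩) (f₁ ⟨y, hy1⟩) (f₁ ⟨z, hz1⟩) with hσ
  have hσinj : Function.Injective σ := mkPerm_inj ha2 hb2 hc2 ha1 hb1 hc1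
  have hσx : σ (g₂ ⟨x, hx2⟩) = f₁ ⟨x, hx1⟩ := mkPerm_a1
  have hσy : σ (g₂ ⟨y, hy2⟩) = f₁ ⟨y, hy1⟩ := mkPerm_a2 ha2
  have hσz : σ (g₂ ⟨z, hz2⟩) = f₁ ⟨z, hz1⟩ := mkPerm_a3 hb2 hc2
  have hagr : Agrees V₁ V₂ f₁ (σ ∘ g₂) := by
    intro v h1 h2
    rcases overlap_cases hinter h1 h2 with rfl | rfl | rfl
    · exact hσx.symm
    · exact hσy.symm
    · exact hσz.symm
  have hσc : σ c' = c := by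
    refine mkPerm_key ha2 hb2 hc2 ha1 hb1 hc1 ?_ ?_ ?_
    · rw [hag x hx1 hx2]; exact (hiff _).symm
    · rw [hag y hy1 hy2]; exact (hiff _).symm
    · rw [hag z hz1 hz2]; exact (hiff _).symm
  refine ⟨σ, hσinj, proper_comp hσinj hq₂, hagr, ?_⟩
  refine ⟨glue_proper hedges hp₁ hp₂ hag, glue_proper hedges hp₁ (proper_comp hσinj hq₂) hagr,
    c, c, ?_, ?_⟩
  · obtain ⟨u, hu⟩ := hne
    refine ⟨u.1, ?_⟩
    show glue hC f₁ f₂ u.1 = c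
    rw [glue_mem2 hag u.2]
    exact hu
  · ext v
    simp only [Set.mem_preimage, Set.mem_singleton_iff]
    by_cases h1 : v ∈ V₁
    · rw [glue_mem1 h1, glue_mem1 h1]
    · rw [show glue hC f₁ f₂ v = f₂ ⟨v, hC v h1⟩ from by unfold glue; exact dif_neg h1,
        show glue hC f₁ (σ ∘ g₂) v = (σ ∘ g₂) ⟨v, hC v h1⟩ from by unfold glue; exact dif_neg h1]
      show f₂ _ = c ↔ σ (g₂ _) = c
      constructor
      · intro h
        rw [← hσc]
        congr 1
        exact (hiff _).mp h
      · intro h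
        rw [← hσc] at h
        exact (hiff _).mpr (hσinj h)

end Steps
end Main
end CSum
namespace CSum
open Relation SimpleGraph

section Main2
variable {V : Type*} {G : SimpleGraph V} {V₁ V₂ : Set V}

lemma colAdj_comp_left {W : Type*} {H : SimpleGraph W} {f g : W → Fin 4}
    {σ : Fin 4 → Fin 4} (hσ : Function.Injective σ) (h : ColAdj H f g) :
    ColAdj H (σ ∘ f) g := by
  obtain ⟨hf, hg, c, c', hne, heq⟩ := h
  refine ⟨proper_comp hσ hf, hg, σ c, c', ?_, ?_⟩
  · obtain ⟨u, hu⟩ := hne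
    refine ⟨u, ?_⟩
    show σ (f u) = σ c
    rw [show f u = c from hu]
  · rw [← heq]
    ext u
    show σ (f u) = σ c ↔ f u = c
    exact ⟨fun hh => hσ hh, fun hh => hh ▸ rfl⟩

section Steps2
variable {x y z : V} {hC : ∀ v : V, v ∉ V₁ → v ∈ V₂}
  (hxy : G.Adj x y) (hxz : G.Adj x z) (hyz : G.Adj y z)
  (hinter : V₁ ∩ V₂ = {x, y, z})
  (hx1 : x ∈ V₁) (hy1 : y ∈ V₁) (hz1 : z ∈ V₁)
  (hx2 : x ∈ V₂) (hy2 : y ∈ V₂) (hz2 : z ∈ V₂)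
  (hedges : ∀ u v, G.Adj u v → (u ∈ V₁ ∧ v ∈ V₁) ∨ (u ∈ V₂ ∧ v ∈ V₂))

include hxy hxz hyz hinter hx1 hy1 hz1 hx2 hy2 hz2 hedges in
lemma lift1 {f₁ g₁ : V₁ → Fin 4}
    (hEq : Relation.EqvGen (ColAdj (G.induce V₁)) f₁ g₁) :
    (∀ f₂ : V₂ → Fin 4, IsProperColoring (G.induce V₂) f₂ → Agrees V₁ V₂ f₁ f₂ →
      ∃ τ : Fin 4 → Fin 4, Function.Injective τ ∧
        IsProperColoring (G.induce V₂) (τ ∘ f₂) ∧ Agrees V₁ V₂ g₁ (τ ∘ f₂) ∧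
        Relation.EqvGen (ColAdj G) (glue hC f₁ f₂) (glue hC g₁ (τ ∘ f₂))) ∧
    (∀ f₂ : V₂ → Fin 4, IsProperColoring (G.induce V₂) f₂ → Agrees V₁ V₂ g₁ f₂ →
      ∃ τ : Fin 4 → Fin 4, Function.Injective τ ∧
        IsProperColoring (G.induce V₂) (τ ∘ f₂) ∧ Agrees V₁ V₂ f₁ (τ ∘ f₂) ∧
        Relation.EqvGen (ColAdj G) (glue hC g₁ f₂) (glue hC f₁ (τ ∘ f₂))) := by
  induction hEq with
  | rel a b hab =>
      constructor
      · intro f₂ hp₂ hag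
        obtain ⟨τ, h1, h2, h3, h4⟩ :=
          step1 hxy hxz hyz hinter hx1 hy1 hz1 hx2 hy2 hz2 hedges hab hp₂ hag
        exact ⟨τ, h1, h2, h3, Relation.EqvGen.rel _ _ h4⟩
      · intro f₂ hp₂ hag
        obtain ⟨τ, h1, h2, h3, h4⟩ :=
          step1 hxy hxz hyz hinter hx1 hy1 hz1 hx2 hy2 hz2 hedges (colAdj_symm hab) hp₂ hag
        exact ⟨τ, h1, h2, h3, Relation.EqvGen.rel _ _ h4⟩
  | refl a =>
      refine ⟨fun f₂ hp₂ hag => ⟨id, fun _ _ h => h, hp₂, hag, Relation.EqvGen.refl _⟩,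
        fun f₂ hp₂ hag => ⟨id, fun _ _ h => h, hp₂, hag, Relation.EqvGen.refl _⟩⟩
  | symm a b _ ih => exact ⟨ih.2, ih.1⟩
  | trans a b c _ _ ih1 ih2 =>
      constructor
      · intro f₂ hp₂ hag
        obtain ⟨τ₁, h1, h2, h3, h4⟩ := ih1.1 f₂ hp₂ hag
        obtain ⟨τ₂, g1, g2, g3, g4⟩ := ih2.1 (τ₁ ∘ f₂) h2 h3
        exact ⟨τ₂ ∘ τ₁, g1.comp h1, g2, g3, h4.trans _ _ _ g4⟩
      · intro f₂ hp₂ hag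
        obtain ⟨τ₁, h1, h2, h3, h4⟩ := ih2.2 f₂ hp₂ hag
        obtain ⟨τ₂, g1, g2, g3, g4⟩ := ih1.2 (τ₁ ∘ f₂) h2 h3
        exact ⟨τ₂ ∘ τ₁, g1.comp h1, g2, g3, h4.trans _ _ _ g4⟩

include hxy hxz hyz hinter hx1 hy1 hz1 hx2 hy2 hz2 hedges in
lemma lift2 {f₂ g₂ : V₂ → Fin 4}
    (hEq : Relation.EqvGen (ColAdj (G.induce V₂)) f₂ g₂) :
    (∀ (f₁ : V₁ → Fin 4), IsProperColoring (G.induce V₁) f₁ →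
      ∀ τ : Fin 4 → Fin 4, Function.Injective τ →
        IsProperColoring (G.induce V₂) (τ ∘ f₂) → Agrees V₁ V₂ f₁ (τ ∘ f₂) →
      ∃ σ : Fin 4 → Fin 4, Function.Injective σ ∧
        IsProperColoring (G.induce V₂) (σ ∘ g₂) ∧ Agrees V₁ V₂ f₁ (σ ∘ g₂) ∧
        Relation.EqvGen (ColAdj G) (glue hC f₁ (τ ∘ f₂)) (glue hC f₁ (σ ∘ g₂))) ∧
    (∀ (f₁ : V₁ → Fin 4), IsProperColoring (G.induce V₁) f₁ →
      ∀ τ : Fin 4 → Fin 4, Function.Injective τ →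
        IsProperColoring (G.induce V₂) (τ ∘ g₂) → Agrees V₁ V₂ f₁ (τ ∘ g₂) →
      ∃ σ : Fin 4 → Fin 4, Function.Injective σ ∧
        IsProperColoring (G.induce V₂) (σ ∘ f₂) ∧ Agrees V₁ V₂ f₁ (σ ∘ f₂) ∧
        Relation.EqvGen (ColAdj G) (glue hC f₁ (τ ∘ g₂)) (glue hC f₁ (σ ∘ f₂))) := by
  induction hEq with
  | rel a b hab =>
      constructor
      · intro f₁ hp₁ τ hτ hp₂' hag
        obtain ⟨σ, h1, h2, h3, h4⟩ :=
          step2 hxy hxz hyz hinter hx1 hy1 hz1 hx2 hy2 hz2 hedges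
            (colAdj_comp_left hτ hab) hp₁ hag
        exact ⟨σ, h1, h2, h3, Relation.EqvGen.rel _ _ h4⟩
      · intro f₁ hp₁ τ hτ hp₂' hag
        obtain ⟨σ, h1, h2, h3, h4⟩ :=
          step2 hxy hxz hyz hinter hx1 hy1 hz1 hx2 hy2 hz2 hedges
            (colAdj_comp_left hτ (colAdj_symm hab)) hp₁ hag
        exact ⟨σ, h1, h2, h3, Relation.EqvGen.rel _ _ h4⟩
  | refl a =>
      exact ⟨fun f₁ hp₁ τ hτ hp₂' hag => ⟨τ, hτ, hp₂', hag, Relation.EqvGen.refl _⟩,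
        fun f₁ hp₁ τ hτ hp₂' hag => ⟨τ, hτ, hp₂', hag, Relation.EqvGen.refl _⟩⟩
  | symm a b _ ih => exact ⟨ih.2, ih.1⟩
  | trans a b c _ _ ih1 ih2 =>
      constructor
      · intro f₁ hp₁ τ hτ hp₂' hag
        obtain ⟨σ₁, h1, h2, h3, h4⟩ := ih1.1 f₁ hp₁ τ hτ hp₂' hag
        obtain ⟨σ₂, g1, g2, g3, g4⟩ := ih2.1 f₁ hp₁ σ₁ h1 h2 h3
        exact ⟨σ₂, g1, g2, g3, h4.trans _ _ _ g4⟩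
      · intro f₁ hp₁ τ hτ hp₂' hag
        obtain ⟨σ₁, h1, h2, h3, h4⟩ := ih2.2 f₁ hp₁ τ hτ hp₂' hag
        obtain ⟨σ₂, g1, g2, g3, g4⟩ := ih1.2 f₁ hp₁ σ₁ h1 h2 h3
        exact ⟨σ₂, g1, g2, g3, h4.trans _ _ _ g4⟩

include hxy hxz hyz in
lemma down_step {S : Set V} (hxS : x ∈ S) (hyS : y ∈ S) (hzS : z ∈ S)
    {f g : V → Fin 4} (h : ColAdj G f g) :
    Relation.EqvGen (ColAdj (G.induce S)) (restr S f) (restr S g) := by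
  obtain ⟨hf, hg, c, c', hne, heq⟩ := h
  have hiff : ∀ v : V, (f v = c ↔ g v = c') := by
    intro v
    have := Set.ext_iff.mp heq v
    simpa using this
  by_cases hA : ∃ u : S, f u.1 = c
  · refine Relation.EqvGen.rel _ _ ⟨restr_proper hf, restr_proper hg, c, c', hA, ?_⟩
    ext u
    simp only [Set.mem_preimage, Set.mem_singleton_iff]
    exact hiff u.1
  · push_neg at hA
    exact threeColor_equiv (a := ⟨x, hxS⟩) (b := ⟨y, hyS⟩) (c := ⟨z, hzS⟩)
      (show (G.induce S).Adj ⟨x, hxS⟩ ⟨y, hyS⟩ from hxy)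
      (show (G.induce S).Adj ⟨x, hxS⟩ ⟨z, hzS⟩ from hxz)
      (show (G.induce S).Adj ⟨y, hyS⟩ ⟨z, hzS⟩ from hyz)
      (restr_proper hf) (restr_proper hg)
      (fun u => hA u) (fun u hu => hA u ((hiff u.1).mpr hu))

include hxy hxz hyz in
lemma down_eqv {S : Set V} (hxS : x ∈ S) (hyS : y ∈ S) (hzS : z ∈ S)
    {f g : V → Fin 4} (hE : Relation.EqvGen (ColAdj G) f g) :
    Relation.EqvGen (ColAdj (G.induce S)) (restr S f) (restr S g) := by
  induction hE with
  | rel a b hab => exact down_step hxy hxz hyz hxS hyS hzS hab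
  | refl a => exact Relation.EqvGen.refl _
  | symm a b _ ih => exact ih.symm _ _
  | trans a b c _ _ ih1 ih2 => exact ih1.trans _ _ _ ih2

end Steps2
end Main2
end CSum

open CSum Relation SimpleGraph

/-- If `G` is a triangle clique-sum of its induced subgraphs `G[V₁]` and `G[V₂]`, then
the number of connected components of `B(G)` is the product of the numbers of connected
components of `B(G[V₁])` and of `B(G[V₂])`. -/
theorem clique_sum_colorComplex_components {V : Type*} [Fintype V] (G : SimpleGraph V)
    (V₁ V₂ : Set V) (hcover : V₁ ∪ V₂ = Set.univ)
    (x y z : V) (hxy : G.Adj x y) (hxz : G.Adj x z) (hyz : G.Adj y z)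
    (hinter : V₁ ∩ V₂ = {x, y, z})
    (hedges : ∀ u v, G.Adj u v → (u ∈ V₁ ∧ v ∈ V₁) ∨ (u ∈ V₂ ∧ v ∈ V₂)) :
    Nat.card ((colorComplex G).ConnectedComponent) =
      Nat.card ((colorComplex (G.induce V₁)).ConnectedComponent) *
        Nat.card ((colorComplex (G.induce V₂)).ConnectedComponent) := by
  classical
  have hx12 : x ∈ V₁ ∩ V₂ := by rw [hinter]; exact Set.mem_insert _ _
  have hy12 : y ∈ V₁ ∩ V₂ := by rw [hinter]; exact Set.mem_insert_of_mem _ (Set.mem_insert _ _)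
  have hz12 : z ∈ V₁ ∩ V₂ := by rw [hinter]; simp
  obtain ⟨hx1, hx2⟩ := hx12
  obtain ⟨hy1, hy2⟩ := hy12
  obtain ⟨hz1, hz2⟩ := hz12
  have hC : ∀ v : V, v ∉ V₁ → v ∈ V₂ := by
    intro v hv
    have hv2 : v ∈ V₁ ∪ V₂ := by rw [hcover]; trivial
    rcases hv2 with h | h
    · exact absurd h hv
    · exact h
  -- the map from the quotient for `G` to the product of the quotients
  let down : PC G → QPC (G.induce V₁) × QPC (G.induce V₂) := fun f =>
    (⟦⟨restr V₁ f.1, restr_proper f.2⟩⟧, ⟦⟨restr V₂ f.1, restr_proper f.2⟩⟧)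
  have hdown : ∀ f g : PC G, (colSetoid G).r f g → down f = down g := by
    intro f g hfg
    have hE : Relation.EqvGen (ColAdj G) f.1 g.1 := hfg
    refine Prod.ext_iff.mpr ⟨?_, ?_⟩
    · exact qpc_rel (down_eqv hxy hxz hyz hx1 hy1 hz1 hE)
    · exact qpc_rel (down_eqv hxy hxz hyz hx2 hy2 hz2 hE)
  let Φ : QPC G → QPC (G.induce V₁) × QPC (G.induce V₂) := Quotient.lift down hdown
  have hsurj : Function.Surjective Φ := by
    rintro ⟨q₁, q₂⟩
    obtain ⟨f₁, rfl⟩ := Quotient.exists_rep q₁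
    obtain ⟨f₂, rfl⟩ := Quotient.exists_rep q₂
    have ha2 : f₂.1 ⟨x, hx2⟩ ≠ f₂.1 ⟨y, hy2⟩ :=
      f₂.2 (show (G.induce V₂).Adj ⟨x, hx2⟩ ⟨y, hy2⟩ from hxy)
    have hb2 : f₂.1 ⟨x, hx2⟩ ≠ f₂.1 ⟨z, hz2⟩ :=
      f₂.2 (show (G.induce V₂).Adj ⟨x, hx2⟩ ⟨z, hz2⟩ from hxz)
    have hc2 : f₂.1 ⟨y, hy2⟩ ≠ f₂.1 ⟨z, hz2⟩ :=
      f₂.2 (show (G.induce V₂).Adj ⟨y, hy2⟩ ⟨z, hz2⟩ from hyz)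
    have ha1 : f₁.1 ⟨x, hx1⟩ ≠ f₁.1 ⟨y, hy1⟩ :=
      f₁.2 (show (G.induce V₁).Adj ⟨x, hx1⟩ ⟨y, hy1⟩ from hxy)
    have hb1 : f₁.1 ⟨x, hx1⟩ ≠ f₁.1 ⟨z, hz1⟩ :=
      f₁.2 (show (G.induce V₁).Adj ⟨x, hx1⟩ ⟨z, hz1⟩ from hxz)
    have hc1 : f₁.1 ⟨y, hy1⟩ ≠ f₁.1 ⟨z, hz1⟩ :=
      f₁.2 (show (G.induce V₁).Adj ⟨y, hy1⟩ ⟨z, hz1⟩ from hyz)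
    set σ : Fin 4 → Fin 4 := mkPerm (f₂.1 ⟨x, hx2⟩) (f₂.1 ⟨y, hy2⟩) (f₂.1 ⟨z, hz2⟩)
      (f₁.1 ⟨x, hx1⟩) (f₁.1 ⟨y, hy1⟩) (f₁.1 ⟨z, hz1⟩) with hσdef
    have hσinj : Function.Injective σ := mkPerm_inj ha2 hb2 hc2 ha1 hb1 hc1
    have hag : Agrees V₁ V₂ f₁.1 (σ ∘ f₂.1) := by
      intro v h1 h2
      rcases overlap_cases hinter h1 h2 with rfl | rfl | rfl
      · exact mkPerm_a1.symm
      · exact (mkPerm_a2 ha2).symm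
      · exact (mkPerm_a3 hb2 hc2).symm
    have hp2' : IsProperColoring (G.induce V₂) (σ ∘ f₂.1) := proper_comp hσinj f₂.2
    have hF : IsProperColoring G (glue hC f₁.1 (σ ∘ f₂.1)) :=
      glue_proper hedges f₁.2 hp2' hag
    refine ⟨⟦⟨glue hC f₁.1 (σ ∘ f₂.1), hF⟩⟧, ?_⟩
    refine Prod.ext_iff.mpr ⟨?_, ?_⟩
    · show (⟦⟨restr V₁ (glue hC f₁.1 (σ ∘ f₂.1)), _⟩⟧ : QPC (G.induce V₁)) = ⟦f₁⟧
      exact congrArg _ (Subtype.ext restr_glue1)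
    · show (⟦⟨restr V₂ (glue hC f₁.1 (σ ∘ f₂.1)), _⟩⟧ : QPC (G.induce V₂)) = ⟦f₂⟧
      have e2 : (⟨restr V₂ (glue hC f₁.1 (σ ∘ f₂.1)), restr_proper hF⟩ : PC (G.induce V₂)) =
          ⟨σ ∘ f₂.1, hp2'⟩ := Subtype.ext (restr_glue2 hag)
      refine (congrArg (Quotient.mk _) e2).trans ?_
      exact qpc_rel (Relation.EqvGen.rel _ _ (colAdj_comp hσinj f₂.2 ⟨x, hx2⟩))
  have hinj : Function.Injective Φ := by
    have key : ∀ f g : PC G, Φ ⟦f⟧ = Φ ⟦g⟧ → (⟦f⟧ : QPC G) = ⟦g⟧ := by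
      intro f g hfg
      have h1 : Relation.EqvGen (ColAdj (G.induce V₁)) (restr V₁ f.1) (restr V₁ g.1) :=
        qpc_exact (congrArg Prod.fst hfg)
      have h2 : Relation.EqvGen (ColAdj (G.induce V₂)) (restr V₂ f.1) (restr V₂ g.1) :=
        qpc_exact (congrArg Prod.snd hfg)
      obtain ⟨τ, hτ, hτp, hτag, hτE⟩ :=
        (lift1 (hC := hC) hxy hxz hyz hinter hx1 hy1 hz1 hx2 hy2 hz2 hedges h1).1
          (restr V₂ f.1) (restr_proper f.2) restr_agrees
      have hE2' : Relation.EqvGen (ColAdj (G.induce V₂)) (τ ∘ restr V₂ f.1) (restr V₂ g.1) :=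
        (Relation.EqvGen.rel _ _ (colAdj_comp hτ (restr_proper f.2) ⟨x, hx2⟩)).trans _ _ _ h2
      obtain ⟨σ, hσ, hσp, hσag, hσE⟩ :=
        (lift2 (hC := hC) hxy hxz hyz hinter hx1 hy1 hz1 hx2 hy2 hz2 hedges hE2').1
          (restr V₁ g.1) (restr_proper g.2) id (fun _ _ h => h) hτp hτag
      have hfix : σ ∘ restr V₂ g.1 = restr V₂ g.1 := by
        funext u
        exact fix3 hσ (g.2 hxy) (g.2 hxz) (g.2 hyz)
          ((hσag x hx1 hx2).symm) ((hσag y hy1 hy2).symm) ((hσag z hz1 hz2).symm)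
          (restr V₂ g.1 u)
      rw [glue_restr] at hτE
      rw [hfix, glue_restr] at hσE
      exact qpc_rel (hτE.trans _ _ _ hσE)
    intro a b
    induction a using Quotient.ind
    induction b using Quotient.ind
    exact key _ _
  calc Nat.card ((colorComplex G).ConnectedComponent)
      = Nat.card (QPC G) := Nat.card_congr (compEquiv x)
    _ = Nat.card (QPC (G.induce V₁) × QPC (G.induce V₂)) :=
        Nat.card_congr (Equiv.ofBijective Φ ⟨hinj, hsurj⟩)
    _ = Nat.card (QPC (G.induce V₁)) * Nat.card (QPC (G.induce V₂)) := Nat.card_prod _ _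
    _ = Nat.card ((colorComplex (G.induce V₁)).ConnectedComponent) *
        Nat.card ((colorComplex (G.induce V₂)).ConnectedComponent) := by
        rw [Nat.card_congr (compEquiv (H := G.induce V₁) ⟨x, hx1⟩),
          Nat.card_congr (compEquiv (H := G.induce V₂) ⟨x, hx2⟩)]
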